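/- arXiv:2204.12247 — 13 statements merged into one kernel-verified Lean document; each statement's English description precedes it below -/
import Mathlib

section
/- Let (G, ·, ∘) be a λ-anti-homomorphic skew left brace. Then for every a ∈ G, the inverse ā of a in (G, ∘) satisfies ā = a⁻¹ · u for some u ∈ Ker λ, where a⁻¹ is the inverse of a in (G, ·) and Ker λ = {x ∈ G : λ_x = id}. -/
variable {G : Type*} [Group G]

/-- The λ-map of a pair of operations: λ_a(b) = a⁻¹ · (a ∘ b). -/
def brLam (circ : G → G → G) (a : G) : G → G := fun b => a⁻¹ * circ a b

/-- `circ` together with identity `e` and inverse `inv` is a group operation on `G`. -/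
def IsGroupOp (circ : G → G → G) (e : G) (inv : G → G) : Prop :=
  (∀ a b c : G, circ (circ a b) c = circ a (circ b c)) ∧
  (∀ a : G, circ e a = a) ∧ (∀ a : G, circ a e = a) ∧
  (∀ a : G, circ (inv a) a = e) ∧ (∀ a : G, circ a (inv a) = e)

/-- The skew left brace compatibility: a ∘ (b·c) = (a∘b) · a⁻¹ · (a∘c). -/
def BraceCompat (circ : G → G → G) : Prop :=
  ∀ a b c : G, circ a (b * c) = circ a b * a⁻¹ * circ a c

/-- λ : (G,·) → Aut(G,·) is an anti-homomorphism. -/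
def LamAntiHom (circ : G → G → G) : Prop :=
  ∀ a b : G, brLam circ (a * b) = brLam circ b ∘ brLam circ a

/-- λ : (G,·) → Aut(G,·) is a homomorphism. -/
def LamHom (circ : G → G → G) : Prop :=
  ∀ a b : G, brLam circ (a * b) = brLam circ a ∘ brLam circ b

/-- (G, ∘, ·) is a skew left brace, i.e. (G, ·, ∘) is symmetric:
a · (b ∘ c) = ((a·b) ∘ ā) ∘ (a·c) with ā the ∘-inverse of a. -/
def SymBrace (circ : G → G → G) (cinv : G → G) : Prop :=
  ∀ a b c : G, a * circ b c = circ (circ (a * b) (cinv a)) (a * c)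

theorem stmt1 {G : Type*} [Group G] (circ : G → G → G) (e : G) (cinv : G → G)
    (hgrp : IsGroupOp circ e cinv) (hbr : BraceCompat circ)
    (hanti : LamAntiHom circ) :
    ∀ a : G, ∃ u : G, brLam circ u = id ∧ cinv a = a⁻¹ * u := by
  obtain ⟨hassoc, hle, hre, hlinv, hrinv⟩ := hgrp
  have h1 : ∀ a : G, circ a 1 = a := by
    intro a
    have := hbr a 1 1
    rw [one_mul] at this
    have h2 : (1 : G) = a⁻¹ * circ a 1 := by
      have h2' : circ a 1 * 1 = circ a 1 * (a⁻¹ * circ a 1) := by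
        rw [mul_one, ← mul_assoc]; exact this
      exact mul_left_cancel h2'
    calc circ a 1 = a * (a⁻¹ * circ a 1) := by group
    _ = a * 1 := by rw [← h2]
    _ = a := mul_one a
  have he : e = 1 := (h1 e).symm.trans (hle 1)
  have hcomp : ∀ a b : G, brLam circ (circ a b) = brLam circ a ∘ brLam circ b := by
    intro a b
    funext c
    simp only [brLam, Function.comp]
    have key : circ (circ a b) c = circ a b * a⁻¹ * circ a (b⁻¹ * circ b c) := by
      rw [hassoc]
      have : circ b c = b * (b⁻¹ * circ b c) := by group
      calc circ a (circ b c) = circ a (b * (b⁻¹ * circ b c)) := by rw [← this]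
      _ = circ a b * a⁻¹ * circ a (b⁻¹ * circ b c) := hbr a b _
    rw [key]; group
  intro a
  refine ⟨a * cinv a, ?_, by group⟩
  have h3 : brLam circ (a * cinv a) = brLam circ (cinv a) ∘ brLam circ a := hanti a (cinv a)
  have h4 : brLam circ (cinv a) ∘ brLam circ a = brLam circ e := by
    rw [← hcomp, hlinv]
  have h5 : brLam circ e = id := by
    rw [he] at hle
    funext c
    simp only [brLam, he, id_eq, hle c]
    group
  rw [h3, h4, h5]
end

section
/- A skew left brace (G, ·, ∘) is symmetric (i.e., (G, ∘, ·) is also a skew left brace) if and only if λ_{a∘b} = λ_{b·a} for all a, b ∈ G. -/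
variable {G : Type*} [Group G]

theorem stmt4 {G : Type*} [Group G] (circ : G → G → G) (e : G) (cinv : G → G)
    (hgrp : IsGroupOp circ e cinv) (hbr : BraceCompat circ) :
    SymBrace circ cinv ↔ ∀ a b : G, brLam circ (circ a b) = brLam circ (b * a) := by
  obtain ⟨hassoc, hel, her, hinvl, hinvr⟩ := hgrp
  have hco : ∀ a : G, circ a 1 = a := by
    intro a
    have h := hbr a 1 1
    rw [one_mul] at h
    have h2 : (1 : G) * circ a 1 = circ a 1 * a⁻¹ * circ a 1 := by rw [one_mul]; exact h
    have h3 := mul_right_cancel h2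
    exact mul_inv_eq_one.mp h3.symm
  have he1 : e = 1 := (hco e).symm.trans (hel 1)
  have hcirc_eq : ∀ a b : G, circ a b = a * brLam circ a b := by
    intro a b; simp [brLam]
  have hlam_mul : ∀ a b c : G, brLam circ a (b * c) = brLam circ a b * brLam circ a c := by
    intro a b c
    simp only [brLam, hbr a b c]
    group
  have hlam_one : ∀ a : G, brLam circ a 1 = 1 := by
    intro a; simp [brLam, hco a]
  have hlam_inv : ∀ a b : G, brLam circ a b⁻¹ = (brLam circ a b)⁻¹ := by
    intro a b
    have h := hlam_mul a b b⁻¹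
    rw [mul_inv_cancel, hlam_one] at h
    exact (inv_eq_of_mul_eq_one_right h.symm).symm
  have hlam_id : brLam circ 1 = id := by
    funext b
    have : circ 1 b = b := he1 ▸ hel b
    simp [brLam, this]
  have key : ∀ a b c : G, circ (circ a b) c = circ a b * brLam circ a (brLam circ b c) := by
    intro a b c
    rw [hassoc, hcirc_eq a (circ b c), hcirc_eq b c, hlam_mul, hcirc_eq a b]
    group
  have hlam_circ : ∀ a b : G, brLam circ (circ a b) = brLam circ a ∘ brLam circ b := by
    intro a b
    funext c
    show (circ a b)⁻¹ * circ (circ a b) c = brLam circ a (brLam circ b c)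
    rw [key]
    group
  have hinv1 : ∀ a : G, circ a (cinv a) = 1 := fun a => (hinvr a).trans he1
  have hinv1' : ∀ a : G, circ (cinv a) a = 1 := fun a => (hinvl a).trans he1
  have hlam_cinv : ∀ a c : G, brLam circ a (brLam circ (cinv a) c) = c := by
    intro a c
    have h := hlam_circ a (cinv a)
    rw [hinv1 a, hlam_id] at h
    exact (congrFun h c).symm
  have hlam_cinv' : ∀ a c : G, brLam circ (cinv a) (brLam circ a c) = c := by
    intro a c
    have h := hlam_circ (cinv a) a
    rw [hinv1' a, hlam_id] at h
    exact (congrFun h c).symm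
  have hlam_a : ∀ a : G, brLam circ (cinv a) a = (cinv a)⁻¹ := by
    intro a
    show (cinv a)⁻¹ * circ (cinv a) a = (cinv a)⁻¹
    rw [hinv1' a, mul_one]
  have key2 : ∀ a b c : G,
      circ (circ (a * b) (cinv a)) (a * c)
        = (a * b) * brLam circ (a * b) (brLam circ (cinv a) c) := by
    intro a b c
    rw [key (a * b) (cinv a) (a * c), hcirc_eq (a * b) (cinv a), hlam_mul (cinv a) a c,
      hlam_a a, hlam_mul (a * b) (cinv a)⁻¹ (brLam circ (cinv a) c), hlam_inv (a * b) (cinv a)]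
    group
  constructor
  · intro hsym
    have hmain : ∀ a b c : G, brLam circ b c = brLam circ (a * b) (brLam circ (cinv a) c) := by
      intro a b c
      have h := hsym a b c
      rw [key2 a b c, hcirc_eq b c, ← mul_assoc] at h
      exact mul_left_cancel h
    have hanti : ∀ a b : G, brLam circ (a * b) = brLam circ b ∘ brLam circ a := by
      intro a b
      funext c
      have hm := hmain a b (brLam circ a c)
      rw [hlam_cinv' a c] at hm
      simpa using hm.symm
    intro a b
    rw [hlam_circ a b, hanti b a]
  · intro h a b c
    have hanti : ∀ x y : G, brLam circ (x * y) = brLam circ y ∘ brLam circ x := by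
      intro x y
      rw [← h y x, hlam_circ y x]
    rw [key2 a b c, hcirc_eq b c, ← mul_assoc]
    congr 1
    rw [hanti a b]
    simp only [Function.comp_apply]
    rw [hlam_cinv a c]
end

section
/- Every λ-anti-homomorphic skew left brace is symmetric. Conversely, if (G, ·, ∘) is a symmetric skew left brace, then both (G, ·, ∘) and (G, ∘, ·) are λ-anti-homomorphic skew left braces. -/
variable {G : Type*} [Group G]

theorem stmt5 {G : Type*} [Group G] (circ : G → G → G) (e : G) (cinv : G → G)
    (hgrp : IsGroupOp circ e cinv) (hbr : BraceCompat circ) :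
    (LamAntiHom circ → SymBrace circ cinv) ∧
    (SymBrace circ cinv →
      LamAntiHom circ ∧
      ∀ a b : G,
        (fun c : G => circ (cinv (circ a b)) (circ a b * c)) =
          (fun c : G => circ (cinv b) (b * c)) ∘ (fun c : G => circ (cinv a) (a * c))) := by
  obtain ⟨hassoc, hel, her, hlinv, hrinv⟩ := hgrp
  -- circ a 1 = a
  have h1 : ∀ a : G, circ a 1 = a := by
    intro a
    have h := hbr a 1 1
    rw [one_mul] at h
    have h' : circ a 1 * 1 = circ a 1 * (a⁻¹ * circ a 1) := by
      rw [mul_one, ← mul_assoc]; exact h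
    have h2 := mul_left_cancel h'
    exact (inv_mul_eq_one.mp h2.symm).symm
  -- e = 1
  have heq1 : e = 1 := by
    have := h1 e
    rw [hel 1] at this
    exact this.symm
  -- λ_a is multiplicative
  have hLhom : ∀ a b c : G, brLam circ a (b * c) = brLam circ a b * brLam circ a c := by
    intro a b c
    simp only [brLam]
    rw [hbr]
    group
  -- circ a b = a * λ_a b
  have hcircdef : ∀ a b : G, circ a b = a * brLam circ a b := by
    intro a b
    simp [brLam, mul_inv_cancel_left]
  -- λ_{a∘b} = λ_a ∘ λ_b
  have hLcirc : ∀ a b c : G, brLam circ (circ a b) c = brLam circ a (brLam circ b c) := by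
    intro a b c
    simp only [brLam]
    rw [hassoc]
    conv_lhs => rw [← mul_inv_cancel_left b (circ b c)]
    rw [hbr]
    group
  -- λ_e = id
  have hLe : ∀ c : G, brLam circ e c = c := by
    intro c
    simp only [brLam]
    rw [hel, heq1, inv_one, one_mul]
  have hLinv1 : ∀ a c : G, brLam circ (cinv a) (brLam circ a c) = c := by
    intro a c
    rw [← hLcirc, hlinv, hLe]
  have hLinv2 : ∀ a c : G, brLam circ a (brLam circ (cinv a) c) = c := by
    intro a c
    rw [← hLcirc, hrinv, hLe]
  have hlaminv : ∀ a : G, brLam circ a (cinv a) = a⁻¹ := by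
    intro a
    simp only [brLam]
    rw [hrinv, heq1, mul_one]
  have hLmulinv : ∀ a b : G, brLam circ a b⁻¹ = (brLam circ a b)⁻¹ := by
    intro a b
    have h := hLhom a b b⁻¹
    rw [mul_inv_cancel] at h
    have h1' : brLam circ a 1 = 1 := by simp [brLam, h1]
    rw [h1'] at h
    exact eq_inv_of_mul_eq_one_right h.symm
  constructor
  · -- LamAntiHom → SymBrace
    intro hanti a b c
    set d := circ (a * b) (cinv a) with hdef
    have hlamd : ∀ x : G, brLam circ d x = brLam circ b x := by
      intro x
      rw [hdef, hLcirc, hanti a b]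
      simp only [Function.comp_apply]
      rw [hLinv2]
    have hd : d = a * b * (brLam circ b a)⁻¹ := by
      rw [hdef, hcircdef (a * b) (cinv a), hanti a b]
      simp only [Function.comp_apply]
      rw [hlaminv, hLmulinv]
    rw [hcircdef d (a * c), hlamd, hLhom b a c, hd, hcircdef b c]
    group
  · -- SymBrace → both
    intro hsym
    constructor
    · -- LamAntiHom
      intro a b
      funext c
      simp only [Function.comp_apply]
      have h0 := hsym a b 1
      rw [h1 b, mul_one] at h0
      -- h0 : a * b = circ (circ (a*b) (cinv a)) a
      have hdb : ∀ x : G, brLam circ (circ (a * b) (cinv a)) x = brLam circ b x := by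
        intro x
        have hx := hsym a b x
        rw [hbr, ← h0] at hx
        have hx' : circ b x = a⁻¹ * (a * b * (circ (a * b) (cinv a))⁻¹ *
            circ (circ (a * b) (cinv a)) x) := eq_inv_mul_iff_mul_eq.mpr hx
        simp only [brLam]
        rw [hx']
        group
      calc brLam circ (a * b) c
          = brLam circ (a * b) (brLam circ (cinv a) (brLam circ a c)) := by rw [hLinv1]
        _ = brLam circ (circ (a * b) (cinv a)) (brLam circ a c) := (hLcirc _ _ _).symm
        _ = brLam circ b (brLam circ a c) := hdb _
    · -- opposite brace λ anti-hom
      intro a b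
      funext c
      simp only [Function.comp_apply]
      have hI : ∀ x y : G, circ (cinv x) (x * y) = brLam circ (cinv x) y := by
        intro x y
        have hx : x * y = circ x (brLam circ (cinv x) y) := by
          rw [hcircdef x, hLinv2]
        rw [hx, ← hassoc, hlinv, hel]
      rw [hI (circ a b) c, hI a c, hI b (brLam circ (cinv a) c)]
      have key : brLam circ (circ a b) (brLam circ (cinv b) (brLam circ (cinv a) c)) = c := by
        rw [hLcirc, hLinv2, hLinv2]
      conv_lhs => rw [← key]
      rw [hLinv1]
end

section
/- Let a group G admit an exact factorization G = AB (so A ∩ B = 1 and every element of G is uniquely a·b with a ∈ A, b ∈ B) with A normal in G. Define (a₁b₁) ∘ (a₂b₂) = a₁a₂b₂b₁ for a₁, a₂ ∈ A, b₁, b₂ ∈ B. Then (G, ·, ∘) is a λ-anti-homomorphic skew left brace, and in particular a symmetric skew brace. -/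
variable {G : Type*} [Group G]

theorem stmt6 {G : Type*} [Group G] (A B : Subgroup G) [A.Normal]
    (α : G → A) (β : G → B)
    (hdec : ∀ g : G, (α g : G) * (β g : G) = g)
    (huniq : ∀ (a : A) (b : B), α ((a : G) * (b : G)) = a ∧ β ((a : G) * (b : G)) = b)
    (circ : G → G → G)
    (hcirc : ∀ g h : G, circ g h = (α g : G) * (α h : G) * (β h : G) * (β g : G)) :
    IsGroupOp circ 1 (fun g : G => (α g : G)⁻¹ * (β g : G)⁻¹) ∧
    BraceCompat circ ∧ LamAntiHom circ ∧
    SymBrace circ (fun g : G => (α g : G)⁻¹ * (β g : G)⁻¹) := by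
  have hN : A.Normal := ‹A.Normal›
  have hchar : ∀ (g x y : G), x ∈ A → y ∈ B → x * y = g →
      (α g : G) = x ∧ (β g : G) = y := by
    intro g x y hx hy hxy
    have h := huniq ⟨x, hx⟩ ⟨y, hy⟩
    constructor
    · have := congrArg (Subtype.val) h.1
      simpa [hxy] using this
    · have := congrArg (Subtype.val) h.2
      simpa [hxy] using this
  have hc : ∀ g h : G, circ g h = (α g : G) * h * (β g : G) := by
    intro g h
    rw [hcirc]
    conv_rhs => rw [← hdec h]
    group
  have hαc : ∀ g h : G, (α (circ g h) : G) = (α g : G) * (α h : G) := by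
    intro g h
    refine (hchar _ _ _ (A.mul_mem (α g).2 (α h).2) (B.mul_mem (β h).2 (β g).2) ?_).1
    rw [hcirc]; group
  have hβc : ∀ g h : G, (β (circ g h) : G) = (β h : G) * (β g : G) := by
    intro g h
    refine (hchar _ _ _ (A.mul_mem (α g).2 (α h).2) (B.mul_mem (β h).2 (β g).2) ?_).2
    rw [hcirc]; group
  have hprod : ∀ g h : G,
      ((α g : G) * ((β g : G) * (α h : G) * (β g : G)⁻¹)) * ((β g : G) * (β h : G)) = g * h := by
    intro g h
    conv_rhs => rw [← hdec g, ← hdec h]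
    group
  have hαm : ∀ g h : G, (α (g * h) : G) = (α g : G) * ((β g : G) * (α h : G) * (β g : G)⁻¹) := by
    intro g h
    exact (hchar _ _ _ (A.mul_mem (α g).2 (hN.conj_mem _ (α h).2 (β g)))
      (B.mul_mem (β g).2 (β h).2) (hprod g h)).1
  have hβm : ∀ g h : G, (β (g * h) : G) = (β g : G) * (β h : G) := by
    intro g h
    exact (hchar _ _ _ (A.mul_mem (α g).2 (hN.conj_mem _ (α h).2 (β g)))
      (B.mul_mem (β g).2 (β h).2) (hprod g h)).2
  have hαi : ∀ g : G, (α ((α g : G)⁻¹ * (β g : G)⁻¹) : G) = (α g : G)⁻¹ := by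
    intro g
    exact (hchar _ _ _ (A.inv_mem (α g).2) (B.inv_mem (β g).2) rfl).1
  have hβi : ∀ g : G, (β ((α g : G)⁻¹ * (β g : G)⁻¹) : G) = (β g : G)⁻¹ := by
    intro g
    exact (hchar _ _ _ (A.inv_mem (α g).2) (B.inv_mem (β g).2) rfl).2
  have hα1 : (α (1 : G) : G) = 1 := (hchar 1 1 1 A.one_mem B.one_mem (one_mul 1)).1
  have hβ1 : (β (1 : G) : G) = 1 := (hchar 1 1 1 A.one_mem B.one_mem (one_mul 1)).2
  have hinv : ∀ g : G, g⁻¹ = (β g : G)⁻¹ * (α g : G)⁻¹ := by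
    intro g
    conv_lhs => rw [← hdec g]
    rw [mul_inv_rev]
  refine ⟨⟨?_, ?_, ?_, ?_, ?_⟩, ?_, ?_, ?_⟩
  · intro a b c
    rw [hc (circ a b) c, hαc, hβc, hc b c, hc a]
    group
  · intro a
    rw [hc, hα1, hβ1]; group
  · intro a
    rw [hc, mul_one, hdec]
  · intro a
    show circ ((α a : G)⁻¹ * (β a : G)⁻¹) a = 1
    rw [hc, hαi, hβi]
    have key : (α a : G)⁻¹ * a * (β a : G)⁻¹ =
        (α a : G)⁻¹ * ((α a : G) * (β a : G)) * (β a : G)⁻¹ := by rw [hdec]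
    rw [key]; group
  · intro a
    show circ a ((α a : G)⁻¹ * (β a : G)⁻¹) = 1
    rw [hc]
    group
  · intro a b c
    rw [hc a (b * c), hc a b, hc a c, hinv a]
    group
  · intro a b
    funext x
    simp only [brLam, Function.comp_apply]
    rw [hc a x, hc b, hc (a*b) x, hαm, hβm, mul_inv_rev, hinv a, hinv b]
    group
  · intro a b c
    show a * circ b c =
      circ (circ (a * b) ((α a : G)⁻¹ * (β a : G)⁻¹)) (a * c)
    rw [hc (circ (a * b) ((α a : G)⁻¹ * (β a : G)⁻¹)) (a * c), hαc, hβc,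
        hαi, hβi, hαm, hβm, hc b c]
    have hac : a * c = (α a : G) * (β a : G) * c := by rw [hdec]
    rw [hac]
    conv_lhs => rw [← hdec a]
    group
end

section
/- Let G = (G, ·) be a group and λ : G → Aut(G) an anti-homomorphism of groups such that a · λ_a(b) · a⁻¹ · b⁻¹ ∈ Ker λ for all a, b ∈ G. Define a ∘ b = a · λ_a(b). Then (G, ∘) is a group and (G, ·, ∘) is a λ-anti-homomorphic skew left brace (hence symmetric). -/
variable {G : Type*} [Group G]

/-!
The kernel condition says that `(a ∘ b) · a⁻¹ · b⁻¹ ∈ Ker λ`, so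
`λ_{a ∘ b} = λ_{b a} = λ_a ∘ λ_b`: λ is a homomorphism on `(G, ∘)`. This multiplicativity alone
makes `∘` associative with identity `1` and inverse `λ_a⁻¹(a⁻¹)`; the brace identity holds because
each `λ_a` is an automorphism, and the symmetric identity follows from
`(a b) ∘ ā = a · (b ∘ a⁻¹)` and `λ_{a · (b ∘ a⁻¹)} = λ_b`.
-/

variable (lamb : G → MulAut G)

def lamOp (a b : G) : G := a * lamb a b

def lamOpInv (a : G) : G := (lamb a)⁻¹ a⁻¹

@[simp]
theorem lamOp_apply (a b : G) : lamOp lamb a b = a * lamb a b := rfl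

@[simp]
theorem lamOpInv_apply (a : G) : lamOpInv lamb a = (lamb a)⁻¹ a⁻¹ := rfl

theorem brLam_lamOp (a : G) : brLam (lamOp lamb) a = lamb a := by
  funext b
  simp [brLam]

theorem braceCompat_lamOp : BraceCompat (lamOp lamb) := by
  intro a b c
  simp [mul_assoc]

theorem lamOp_lamOpInv (a : G) : lamOp lamb a (lamOpInv lamb a) = 1 := by
  simp

section MapLamOp

variable {lamb}
variable (hmap : ∀ a b : G, lamb (lamOp lamb a b) = lamb a * lamb b)
include hmap

theorem lamb_one_of_map_lamOp : lamb 1 = 1 := by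
  have h := hmap 1 1
  rwa [lamOp_apply, one_mul, map_one, left_eq_mul] at h

theorem lamb_lamOpInv_of_map_lamOp (a : G) : lamb (lamOpInv lamb a) = (lamb a)⁻¹ := by
  have h := hmap a (lamOpInv lamb a)
  rw [lamOp_lamOpInv, lamb_one_of_map_lamOp hmap] at h
  exact eq_inv_of_mul_eq_one_right h.symm

theorem isGroupOp_lamOp : IsGroupOp (lamOp lamb) 1 (lamOpInv lamb) := by
  refine ⟨fun a b c => ?_, fun a => ?_, fun a => ?_, fun a => ?_, lamOp_lamOpInv lamb⟩
  · rw [lamOp_apply lamb (lamOp lamb a b), hmap]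
    simp [mul_assoc]
  · simp [lamb_one_of_map_lamOp hmap]
  · simp
  · rw [lamOp_apply, lamb_lamOpInv_of_map_lamOp hmap, lamOpInv_apply, ← map_mul]
    simp

end MapLamOp

section AntiHom

variable {lamb}
variable (hanti : ∀ a b : G, lamb (a * b) = lamb b * lamb a)
include hanti

theorem lamAntiHom_lamOp : LamAntiHom (lamOp lamb) := by
  intro a b
  simp only [brLam_lamOp, hanti]
  rfl

theorem lamb_one_of_antiHom : lamb 1 = 1 := by
  have h := hanti 1 1
  rwa [one_mul, right_eq_mul] at h

theorem lamb_inv_of_antiHom (a : G) : lamb a⁻¹ = (lamb a)⁻¹ := by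
  have h := hanti a a⁻¹
  rw [mul_inv_cancel, lamb_one_of_antiHom hanti] at h
  exact eq_inv_of_mul_eq_one_left h.symm

theorem map_lamOp_of_ker (hker : ∀ a b : G, lamb (a * lamb a b * a⁻¹ * b⁻¹) = 1) (a b : G) :
    lamb (lamOp lamb a b) = lamb a * lamb b := by
  have hsplit : a * lamb a b = (a * lamb a b * a⁻¹ * b⁻¹) * (b * a) := by group
  rw [lamOp_apply, hsplit, hanti, hker, mul_one, hanti]

theorem symBrace_lamOp (hmap : ∀ a b : G, lamb (lamOp lamb a b) = lamb a * lamb b) :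
    SymBrace (lamOp lamb) (lamOpInv lamb) := by
  intro a b c
  have hleft : lamOp lamb (a * b) (lamOpInv lamb a) = a * lamOp lamb b a⁻¹ := by
    simp [hanti, MulAut.mul_apply, mul_assoc]
  have hlamb : lamb (a * lamOp lamb b a⁻¹) = lamb b := by
    rw [hanti, hmap, lamb_inv_of_antiHom hanti, mul_assoc, inv_mul_cancel, mul_one]
  rw [hleft, lamOp_apply lamb (a * _), hlamb]
  simp [mul_assoc]

end AntiHom

theorem stmt7 {G : Type*} [Group G] (lamb : G → MulAut G)
    (hanti : ∀ a b : G, lamb (a * b) = lamb b * lamb a)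
    (hker : ∀ a b : G, lamb (a * lamb a b * a⁻¹ * b⁻¹) = 1) :
    IsGroupOp (fun a b : G => a * lamb a b) 1 (fun a : G => (lamb a)⁻¹ a⁻¹) ∧
    BraceCompat (fun a b : G => a * lamb a b) ∧
    LamAntiHom (fun a b : G => a * lamb a b) ∧
    SymBrace (fun a b : G => a * lamb a b) (fun a : G => (lamb a)⁻¹ a⁻¹) := by
  have hmap := map_lamOp_of_ker hanti hker
  exact ⟨isGroupOp_lamOp hmap, braceCompat_lamOp lamb, lamAntiHom_lamOp hanti,
    symBrace_lamOp hanti hmap⟩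
end

section
/- Let G be a group and λ : G → Aut(G), a ↦ λ_a, a group homomorphism such that b⁻¹ · λ_a(b) ∈ Ker λ for all a, b ∈ G. Then H_λ = {(λ_a, a) : a ∈ G} is a regular subgroup of the holomorph Hol(G) = Aut(G) ⋉ G, where (f, a)(g, b) = (fg, a·f(b)). Conversely, if H_λ is a subgroup of Hol(G), then b⁻¹·λ_a(b) ∈ Ker λ for all a, b ∈ G. -/
variable {G : Type*} [Group G]

theorem stmt8 {G : Type*} [Group G] (lamb : G →* MulAut G) :
    ((∀ a b : G, lamb (b⁻¹ * lamb a b) = 1) ↔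
      ∃ H : Subgroup (G ⋊[MonoidHom.id (MulAut G)] MulAut G),
        (H : Set (G ⋊[MonoidHom.id (MulAut G)] MulAut G)) =
          {p | p.right = lamb p.left}) ∧
    ((∀ a b : G, lamb (b⁻¹ * lamb a b) = 1) →
      ∀ g : G, ∃! p : G ⋊[MonoidHom.id (MulAut G)] MulAut G,
        p.right = lamb p.left ∧ p.left * p.right 1 = g) := by
  constructor
  · constructor
    · intro h
      have key : ∀ a b : G, lamb (lamb a b) = lamb b := by
        intro a b
        have h1 := h a b
        rw [map_mul, map_inv, inv_mul_eq_one] at h1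
        exact h1.symm
      refine ⟨{ carrier := {p | p.right = lamb p.left}, one_mem' := by simp, mul_mem' := ?_, inv_mem' := ?_ }, rfl⟩
      · rintro p q (hp : p.right = _) (hq : q.right = _)
        show (p * q).right = lamb (p * q).left
        rw [SemidirectProduct.mul_right, SemidirectProduct.mul_left, map_mul, hp, hq]
        simp only [MonoidHom.id_apply]
        rw [key p.left q.left]
      · rintro p (hp : p.right = _)
        show p⁻¹.right = lamb p⁻¹.left
        rw [SemidirectProduct.inv_right, SemidirectProduct.inv_left, hp]
        simp only [MonoidHom.id_apply]
        have e1 : ((lamb p.left)⁻¹ : MulAut G) p.left⁻¹ = lamb p.left⁻¹ p.left⁻¹ := by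
          rw [map_inv lamb p.left]
        rw [e1, key p.left⁻¹ p.left⁻¹, map_inv]
    · rintro ⟨H, hH⟩ a b
      have mem : ∀ p, p ∈ H ↔ p.right = lamb p.left := fun p => by
        rw [← SetLike.mem_coe, hH]; rfl
      have hp : (⟨a, lamb a⟩ : G ⋊[MonoidHom.id (MulAut G)] MulAut G) ∈ H := (mem _).mpr rfl
      have hq : (⟨b, lamb b⟩ : G ⋊[MonoidHom.id (MulAut G)] MulAut G) ∈ H := (mem _).mpr rfl
      have hpq := (mem _).mp (H.mul_mem hp hq)
      simp only [SemidirectProduct.mul_right, SemidirectProduct.mul_left, MonoidHom.id_apply] at hpq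
      rw [map_mul] at hpq
      have h2 := mul_left_cancel hpq.symm
      rw [map_mul, map_inv, inv_mul_eq_one]
      exact h2.symm
  · intro _ g
    refine ⟨⟨g, lamb g⟩, ⟨rfl, by simp⟩, ?_⟩
    rintro p ⟨h1, h2⟩
    have hl : p.left = g := by simpa [h1] using h2
    have : p = ⟨p.left, p.right⟩ := rfl
    rw [this, hl, h1, hl]
end

section
/- Let G be a group and λ : G → Aut(G) a group homomorphism with b⁻¹λ_a(b) ∈ Ker λ for all a, b ∈ G. Define a ∘ b = a · λ_a(b). Then (G, ∘) is a group and (G, ·, ∘) is a skew left brace whose associated λ-map (a ↦ (b ↦ a⁻¹·(a∘b))) equals λ, and is a homomorphism (G, ·) → Aut(G, ·); i.e., (G, ·, ∘) is a λ-homomorphic skew left brace. -/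
variable {G : Type*} [Group G]

theorem stmt9 {G : Type*} [Group G] (lamb : G →* MulAut G)
    (hker : ∀ a b : G, lamb (b⁻¹ * lamb a b) = 1) :
    IsGroupOp (fun a b : G => a * lamb a b) 1 (fun a : G => (lamb a)⁻¹ a⁻¹) ∧
    BraceCompat (fun a b : G => a * lamb a b) ∧
    (∀ a b : G, brLam (fun a b : G => a * lamb a b) a b = lamb a b) ∧
    LamHom (fun a b : G => a * lamb a b) := by
  have key : ∀ a b : G, lamb (lamb a b) = lamb b := by
    intro a b
    have h := hker a b
    rw [map_mul, map_inv] at h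
    exact (inv_mul_eq_one.mp h).symm
  have lam_circ : ∀ a b : G, lamb (a * lamb a b) = lamb (a * b) := by
    intro a b; rw [map_mul, key, map_mul]
  have lam_inv : ∀ a : G, lamb ((lamb a)⁻¹ a⁻¹) = (lamb a)⁻¹ := by
    intro a
    have := key a ((lamb a)⁻¹ a⁻¹)
    rw [MulAut.apply_inv_self] at this
    rw [← this, map_inv]
  refine ⟨⟨?_, ?_, ?_, ?_, ?_⟩, ?_, ?_, ?_⟩
  · intro a b c
    simp only [lam_circ, map_mul, MulAut.mul_apply, mul_assoc]
  · intro a; simp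
  · intro a; simp
  · intro a
    simp only [lam_inv]
    simp
  · intro a
    simp [MulAut.apply_inv_self]
  · intro a b c
    simp only [map_mul, MulAut.mul_apply]
    group
  · intro a b
    simp [brLam]
  · intro a b
    funext c
    simp [brLam, map_mul, mul_assoc]
end

section
/- Every λ-homomorphic skew left brace (G, ·, ∘) with λ(G) abelian in Aut(G, ·) is a symmetric skew brace. -/
variable {G : Type*} [Group G]

theorem stmt10 {G : Type*} [Group G] (circ : G → G → G) (e : G) (cinv : G → G)
    (hgrp : IsGroupOp circ e cinv) (hbr : BraceCompat circ)
    (hhom : LamHom circ)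
    (hab : ∀ a b : G, brLam circ a ∘ brLam circ b = brLam circ b ∘ brLam circ a) :
    SymBrace circ cinv := by
  obtain ⟨hassoc, hle, hre, hlinv, hrinv⟩ := hgrp
  have hc : ∀ x y : G, circ x y = x * brLam circ x y := by
    intro x y; simp [brLam]
  have hmul : ∀ x y z : G, brLam circ x (y * z) = brLam circ x y * brLam circ x z := by
    intro x y z; simp only [brLam, hbr x y z]; group
  have hone : ∀ x : G, brLam circ x 1 = 1 := by
    intro x
    have h := hmul x 1 1
    rw [one_mul] at h
    have h2 : brLam circ x 1 * 1 = brLam circ x 1 * brLam circ x 1 := by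
      rw [mul_one]; exact h
    exact (mul_left_cancel h2).symm
  have he : e = 1 := by
    have h := hone e
    simp only [brLam, hle] at h
    have := congrArg (fun t => e * t) h
    simpa using this.symm
  have hlamCirc : ∀ x y z : G,
      brLam circ (circ x y) z = brLam circ x (brLam circ y z) := by
    intro x y z
    have h1 : circ (circ x y) z = circ x y * brLam circ x (brLam circ y z) := by
      rw [hassoc, hc y z, hbr]
      simp only [brLam]
      group
    have h2 : circ x y * brLam circ (circ x y) z
        = circ x y * brLam circ x (brLam circ y z) := by
      rw [← hc, h1]
    exact mul_left_cancel h2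
  have hlamOneId : ∀ z : G, brLam circ 1 z = z := by
    intro z
    simp only [brLam, inv_one, one_mul]
    rw [← he, hle]
  have hinvR : ∀ x z : G, brLam circ x (brLam circ (cinv x) z) = z := by
    intro x z
    rw [← hlamCirc, hrinv, he, hlamOneId]
  have hAinv : ∀ x : G, brLam circ x (cinv x) = x⁻¹ := by
    intro x
    have h := hrinv x
    rw [hc x (cinv x), he] at h
    exact (inv_eq_of_mul_eq_one_right h).symm
  intro a b c
  have habp : ∀ x y z : G, brLam circ x (brLam circ y z) = brLam circ y (brLam circ x z) := by
    intro x y z; exact congrFun (hab x y) z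
  have hhp : ∀ x y z : G, brLam circ (x * y) z = brLam circ x (brLam circ y z) := by
    intro x y z; exact congrFun (hhom x y) z
  conv_rhs => rw [hc, hlamCirc, hc (a * b) (cinv a)]
  rw [hhp a b (cinv a), habp a b (cinv a), hAinv a]
  rw [hhp a b (brLam circ (cinv a) (a * c)), habp b (cinv a) (a * c), hinvR a, hmul b a c]
  rw [hc b c]
  have h1 : brLam circ b a⁻¹ * brLam circ b a = 1 := by
    rw [← hmul, inv_mul_cancel, hone]
  rw [show a * b * brLam circ b a⁻¹ * (brLam circ b a * brLam circ b c)
      = a * b * ((brLam circ b a⁻¹ * brLam circ b a) * brLam circ b c) by group,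
    h1, one_mul, mul_assoc]
end

section
/- Let (G, ·, ∘) be a λ-homomorphic skew left brace such that λ(G, ·) is an abelian subgroup of Aut(G, ·). Then for all a, b, c ∈ G one has λ_a(b ∘ c) = λ_a(b) ∘ λ_a(c); that is, each λ_a is also an automorphism of the group (G, ∘). -/
variable {G : Type*} [Group G]

theorem stmt12 {G : Type*} [Group G] (circ : G → G → G) (e : G) (cinv : G → G)
    (hgrp : IsGroupOp circ e cinv) (hbr : BraceCompat circ)
    (hhom : LamHom circ)
    (hab : ∀ a b : G, brLam circ a ∘ brLam circ b = brLam circ b ∘ brLam circ a) :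
    ∀ a b c : G, brLam circ a (circ b c) = circ (brLam circ a b) (brLam circ a c) := by
  obtain ⟨hassoc, hel, her, hil, hir⟩ := hgrp
  -- λ_a is multiplicative
  have hmul : ∀ a b c : G, brLam circ a (b * c) = brLam circ a b * brLam circ a c := by
    intro a b c
    simp only [brLam]
    rw [hbr a b c]
    group
  -- λ_a 1 = 1
  have hone : ∀ a : G, brLam circ a 1 = 1 := by
    intro a
    have := hmul a 1 1
    rw [one_mul] at this
    exact left_eq_mul.mp this
  -- λ_a (b⁻¹) = (λ_a b)⁻¹
  have hinv : ∀ a b : G, brLam circ a b⁻¹ = (brLam circ a b)⁻¹ := by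
    intro a b
    have h := hmul a b b⁻¹
    rw [mul_inv_cancel, hone] at h
    exact eq_inv_of_mul_eq_one_right h.symm
  -- a ∘ b = a * λ_a b
  have hcirc : ∀ a b : G, circ a b = a * brLam circ a b := by
    intro a b; simp [brLam]
  -- circ a is injective, hence λ_a is injective
  have hinj : ∀ a x y : G, brLam circ a x = brLam circ a y → x = y := by
    intro a x y h
    have h2 : circ a x = circ a y := by
      have := congrArg (fun t => a * t) h
      simpa [brLam] using this
    have := congrArg (fun t => circ (cinv a) t) h2
    simpa [← hassoc, hil, hel] using this
  -- λ_{a∘b} = λ_a ∘ λ_b (standard brace fact)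
  have hcomp : ∀ a b c : G, brLam circ (circ a b) c = brLam circ a (brLam circ b c) := by
    intro a b c
    have h1 : brLam circ a (brLam circ b c) = brLam circ a b⁻¹ * a⁻¹ * circ a (circ b c) := by
      simp only [brLam]
      rw [hbr a b⁻¹ (circ b c)]
      group
    rw [h1, hinv, ← hassoc, hcirc a b]
    simp only [brLam]
    group
  -- λ_{λ_a b} = λ_b
  have hkey : ∀ a b c : G, brLam circ (brLam circ a b) c = brLam circ b c := by
    intro a b c
    apply hinj a
    have h1 := congrFun (hhom a (brLam circ a b)) c
    simp only [Function.comp_apply] at h1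
    rw [← hcirc a b] at h1
    rw [← h1, hcomp]
  intro a b c
  rw [hcirc b c, hmul, hcirc (brLam circ a b), hkey a b]
  have := congrFun (hab a b) c
  simp only [Function.comp] at this
  rw [this]
end

section
/- Let (G, ·, ∘) be a λ-homomorphic skew left brace with λ(G, ·) abelian. If λ_a has order dividing n in Aut(G, ·) for every a ∈ G, then defining iteratively a ∘₀ b = a·b and a ∘_{i+1} b = a ∘_i λ_a(b), one has a ∘_n b = a · b for all a, b ∈ G; i.e., ∘_n = ∘₀. -/
variable {G : Type*} [Group G]

theorem stmt13 {G : Type*} [Group G] (circ : G → G → G) (e : G) (cinv : G → G)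
    (hgrp : IsGroupOp circ e cinv) (hbr : BraceCompat circ)
    (hhom : LamHom circ)
    (hab : ∀ a b : G, brLam circ a ∘ brLam circ b = brLam circ b ∘ brLam circ a)
    (n : ℕ) (hord : ∀ a : G, (brLam circ a)^[n] = id)
    (op : ℕ → G → G → G)
    (hop0 : ∀ a b : G, op 0 a b = a * b)
    (hopS : ∀ (i : ℕ) (a b : G), op (i + 1) a b = op i a (brLam circ a b)) :
    ∀ a b : G, op n a b = a * b := by
  have key : ∀ (i : ℕ) (a b : G), op i a b = a * (brLam circ a)^[i] b := by
    intro i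
    induction i with
    | zero => intro a b; simpa using hop0 a b
    | succ k ih =>
        intro a b
        rw [hopS, ih, Function.iterate_succ, Function.comp_apply]
  intro a b
  rw [key, hord a]
  rfl
end

section
/- Let (G, ·, ∘) and (G, ·, ⋆) be two λ-anti-homomorphic skew left braces with associated maps λ° and λ⋆ such that every λ°_a commutes with every λ⋆_b in Aut(G, ·). Then (G, ∘, ⋆) is a skew left brace if and only if b⁻¹ · λ⋆_a(b) ∈ Ker λ° for all a, b ∈ G. -/
variable {G : Type*} [Group G]

theorem stmt14 {G : Type*} [Group G] (circ star : G → G → G) (e₁ e₂ : G)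
    (cinv sinv : G → G)
    (hg1 : IsGroupOp circ e₁ cinv) (hg2 : IsGroupOp star e₂ sinv)
    (hb1 : BraceCompat circ) (hb2 : BraceCompat star)
    (ha1 : LamAntiHom circ) (ha2 : LamAntiHom star)
    (hcomm : ∀ a b : G, brLam circ a ∘ brLam star b = brLam star b ∘ brLam circ a) :
    (∀ a b c : G, star a (circ b c) = circ (circ (star a b) (cinv a)) (star a c)) ↔
      (∀ a b : G, brLam circ (b⁻¹ * brLam star a b) = id) := by
  obtain ⟨has1, hidl1, -, -, hinvr1⟩ := hg1
  obtain ⟨has2, hidl2, -, -, -⟩ := hg2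
  -- right identity for circ and star
  have hone1 : ∀ a : G, circ a 1 = a := by
    intro a
    have h := hb1 a 1 1
    rw [one_mul] at h
    have h2 : (1 : G) = circ a 1 * a⁻¹ := by
      have := congrArg (fun y => y * (circ a 1)⁻¹) h
      simpa [mul_assoc] using this
    have h3 : circ a 1 * a⁻¹ = 1 := h2.symm
    exact mul_inv_eq_one.mp h3
  have hone2 : ∀ a : G, star a 1 = a := by
    intro a
    have h := hb2 a 1 1
    rw [one_mul] at h
    have h2 : (1 : G) = star a 1 * a⁻¹ := by
      have := congrArg (fun y => y * (star a 1)⁻¹) h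
      simpa [mul_assoc] using this
    exact mul_inv_eq_one.mp h2.symm
  have he1 : e₁ = 1 := (hone1 e₁).symm.trans (hidl1 1)
  have he2 : e₂ = 1 := (hone2 e₂).symm.trans (hidl2 1)
  have hcirc1 : ∀ b : G, circ 1 b = b := fun b => he1 ▸ hidl1 b
  have hstar1 : ∀ b : G, star 1 b = b := fun b => he2 ▸ hidl2 b
  -- basic λ-lemmas for circ
  have hLanti : ∀ x y b : G, brLam circ (x * y) b = brLam circ y (brLam circ x b) :=
    fun x y b => congrFun (ha1 x y) b
  have hManti : ∀ x y b : G, brLam star (x * y) b = brLam star y (brLam star x b) :=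
    fun x y b => congrFun (ha2 x y) b
  have hL1 : ∀ b : G, brLam circ 1 b = b := by intro b; simp [brLam, hcirc1]
  have hM1 : ∀ b : G, brLam star 1 b = b := by intro b; simp [brLam, hstar1]
  have hLinv : ∀ a b : G, brLam circ a⁻¹ (brLam circ a b) = b := by
    intro a b
    rw [← hLanti a a⁻¹ b, mul_inv_cancel, hL1]
  have hLinv' : ∀ a b : G, brLam circ a (brLam circ a⁻¹ b) = b := by
    intro a b
    rw [← hLanti a⁻¹ a b, inv_mul_cancel, hL1]
  have hMinv' : ∀ a b : G, brLam star a (brLam star a⁻¹ b) = b := by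
    intro a b
    rw [← hManti a⁻¹ a b, inv_mul_cancel, hM1]
  have hLmul : ∀ a x y : G, brLam circ a (x * y) = brLam circ a x * brLam circ a y := by
    intro a x y
    simp [brLam, hb1 a x y, mul_assoc]
  have hMmul : ∀ a x y : G, brLam star a (x * y) = brLam star a x * brLam star a y := by
    intro a x y
    simp [brLam, hb2 a x y, mul_assoc]
  have hL1' : ∀ a : G, brLam circ a 1 = 1 := by intro a; simp [brLam, hone1]
  have hcircL : ∀ a b : G, circ a b = a * brLam circ a b := by intro a b; simp [brLam]
  have hstarM : ∀ a b : G, star a b = a * brLam star a b := by intro a b; simp [brLam]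
  have hLcinv : ∀ a : G, brLam circ a (cinv a) = a⁻¹ := by
    intro a
    simp [brLam, hinvr1 a, he1]
  have hLconj : ∀ a b c : G,
      brLam circ (brLam circ a b) (brLam circ a c) = brLam circ a (brLam circ b c) := by
    intro a b c
    have h := has1 a b c
    rw [hcircL a b, hcircL (a * brLam circ a b) c, hLanti a (brLam circ a b) c,
        hcircL b c, hcircL a (b * brLam circ b c), hLmul a b (brLam circ b c),
        mul_assoc] at h
    exact mul_left_cancel (mul_left_cancel h)
  have hc : ∀ p q x : G, brLam circ p (brLam star q x) = brLam star q (brLam circ p x) :=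
    fun p q x => congrFun (hcomm p q) x
  -- key computations of both sides of the brace condition
  have key : ∀ a b c : G, circ (circ (star a b) (cinv a)) (star a c)
      = a * brLam star a b * brLam circ (brLam star a b) (brLam star a c) := by
    intro a b c
    rw [hstarM a b, hstarM a c, hcircL (a * brLam star a b) (cinv a),
        hLanti a (brLam star a b) (cinv a), hLcinv a]
    have hLcu : ∀ x : G,
        brLam circ (a * brLam star a b * brLam circ (brLam star a b) a⁻¹) x
          = brLam circ (brLam star a b) x := by
      intro x
      rw [hLanti (a * brLam star a b) (brLam circ (brLam star a b) a⁻¹) x,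
          hLanti a (brLam star a b) x, hLconj, hLinv]
    rw [hcircL (a * brLam star a b * brLam circ (brLam star a b) a⁻¹) (a * brLam star a c),
        hLcu, hLmul (brLam star a b) a (brLam star a c)]
    have hcanc : brLam circ (brLam star a b) a⁻¹ * brLam circ (brLam star a b) a = 1 := by
      rw [← hLmul, inv_mul_cancel, hL1']
    calc a * brLam star a b * brLam circ (brLam star a b) a⁻¹ *
          (brLam circ (brLam star a b) a * brLam circ (brLam star a b) (brLam star a c))
        = a * brLam star a b *
            (brLam circ (brLam star a b) a⁻¹ * brLam circ (brLam star a b) a) *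
            brLam circ (brLam star a b) (brLam star a c) := by
          simp [mul_assoc]
      _ = a * brLam star a b * brLam circ (brLam star a b) (brLam star a c) := by
          rw [hcanc, mul_one]
  have keyL : ∀ a b c : G, star a (circ b c)
      = a * brLam star a b * brLam star a (brLam circ b c) := by
    intro a b c
    rw [hstarM a (circ b c), hcircL b c, hMmul a b (brLam circ b c), ← mul_assoc]
  constructor
  · intro H a b
    have hy : ∀ y : G, brLam circ (brLam star a b) y = brLam circ b y := by
      intro y
      have h := H a b (brLam star a⁻¹ y)
      rw [key, keyL, hMinv' a y] at h
      have h2 := mul_left_cancel h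
      rw [hc b a⁻¹ y, hMinv' a (brLam circ b y)] at h2
      exact h2.symm
    funext x
    show brLam circ (b⁻¹ * brLam star a b) x = x
    rw [hLanti b⁻¹ (brLam star a b) x, hy, hLinv']
  · intro K a b c
    have hy : ∀ y : G, brLam circ (brLam star a b) y = brLam circ b y := by
      intro y
      have h := congrFun (K a b) (brLam circ b y)
      rw [hLanti b⁻¹ (brLam star a b) (brLam circ b y), hLinv] at h
      exact h
    rw [key, keyL, hy, hc b a c]
end

section
/- Let (G, ·, ∘) be a λ-homomorphic skew left brace such that every inner automorphism of (G, ·) commutes with every λ_a in Aut(G, ·). Then the opposite skew brace (G, ·^{op}, ∘) is a symmetric skew brace, where a ·^{op} b = b · a. -/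
variable {G : Type*} [Group G]

theorem stmt16 {G : Type*} [Group G] (circ : G → G → G) (e : G) (cinv : G → G)
    (hgrp : IsGroupOp circ e cinv) (hbr : BraceCompat circ)
    (hhom : LamHom circ)
    (hcomm : ∀ g a b : G, g * brLam circ a b * g⁻¹ = brLam circ a (g * b * g⁻¹)) :
    (∀ a b c : G, circ a (c * b) = circ a c * a⁻¹ * circ a b) ∧
    (∀ a b c : G, circ b c * a = circ (circ (b * a) (cinv a)) (c * a)) := by

  obtain ⟨hassoc, hle, hre, hlinv, hrinv⟩ := hgrp
  have he : e = 1 := by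
    have h := hbr e 1 1
    rw [one_mul, hle, one_mul, mul_one] at h
    exact inv_eq_one.mp h.symm
  have lam_circ : ∀ a x : G, circ a x = a * brLam circ a x := by
    intro a x; simp [brLam]
  have lam_mul : ∀ a x y : G, brLam circ a (x * y) = brLam circ a x * brLam circ a y := by
    intro a x y; simp only [brLam]; rw [hbr a x y]; simp [mul_assoc]
  have lam_hhom : ∀ a b x : G, brLam circ (a * b) x = brLam circ a (brLam circ b x) := by
    intro a b x; rw [hhom]; rfl
  have lam_comp : ∀ a b x : G, brLam circ (circ a b) x = brLam circ a (brLam circ b x) := by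
    intro a b x
    have h1 : circ (circ a b) x = circ a (b * brLam circ b x) := by
      rw [hassoc, ← lam_circ]
    simp only [brLam] at h1 ⊢
    rw [h1, hbr]
    group
  have lam_one : ∀ x : G, brLam circ 1 x = x := by
    intro x
    have h : circ 1 x = x := by rw [← he, hle]
    simp [brLam, h]
  have lam_cinv : ∀ a : G, brLam circ a (cinv a) = a⁻¹ := by
    intro a; simp [brLam, hrinv, he]
  have lam_cancel : ∀ a x : G, brLam circ a (brLam circ (cinv a) x) = x := by
    intro a x; rw [← lam_comp, hrinv, he, lam_one]
  constructor
  · intro a b c; exact hbr a c b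
  · intro a b c
    have h1 : brLam circ (b * a) (cinv a) = brLam circ b a⁻¹ := by
      rw [lam_hhom, lam_cinv]
    have h2 : brLam circ (b * a) (brLam circ (cinv a) (c * a)) = brLam circ b (c * a) := by
      rw [lam_hhom, lam_cancel]
    rw [lam_circ (circ (b * a) (cinv a)) (c * a), lam_comp, h2,
        lam_circ (b * a) (cinv a), h1, lam_circ b c]
    have h4 : brLam circ b (a⁻¹ * (c * a)) = a⁻¹ * brLam circ b c * a := by
      have h := hcomm a⁻¹ b c
      rw [inv_inv] at h
      rw [← mul_assoc, ← h]
    have h3 : brLam circ b a⁻¹ * brLam circ b (c * a) = a⁻¹ * brLam circ b c * a := by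
      rw [← lam_mul, h4]
    calc b * brLam circ b c * a
        = b * a * (a⁻¹ * brLam circ b c * a) := by group
      _ = b * a * (brLam circ b a⁻¹ * brLam circ b (c * a)) := by rw [h3]
      _ = b * a * brLam circ b a⁻¹ * brLam circ b (c * a) := by group
end

section
/- Let (G, ·, B) be a Rota–Baxter group and define a ∘ b = a · B(a) · b · B(a)⁻¹. Then (G, ·, ∘) is a skew left brace, and it is symmetric if and only if B(c)⁻¹ · B(a)⁻¹ · B(c·a) ∈ Z(G, ·) for all a, c ∈ G. In particular, if B is an anti-homomorphism, then (G, ·, ∘) is symmetric. -/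
variable {G : Type*} [Group G]

theorem stmt18 {G : Type*} [Group G] (B : G → G)
    (hRB : ∀ g h : G, B g * B h = B (g * B g * h * (B g)⁻¹)) :
    IsGroupOp (fun a b : G => a * B a * b * (B a)⁻¹) 1
        (fun a : G => (B a)⁻¹ * a⁻¹ * B a) ∧
    BraceCompat (fun a b : G => a * B a * b * (B a)⁻¹) ∧
    (SymBrace (fun a b : G => a * B a * b * (B a)⁻¹)
        (fun a : G => (B a)⁻¹ * a⁻¹ * B a) ↔
      ∀ a c : G, (B c)⁻¹ * (B a)⁻¹ * B (c * a) ∈ Subgroup.center G) ∧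
    ((∀ a c : G, B (a * c) = B c * B a) →
      SymBrace (fun a b : G => a * B a * b * (B a)⁻¹)
        (fun a : G => (B a)⁻¹ * a⁻¹ * B a)) := by
  have hB1 : B 1 = 1 := by
    have h := hRB 1 1
    have h2 : (1 : G) * B 1 * 1 * (B 1)⁻¹ = 1 := by group
    rw [h2] at h
    exact mul_left_cancel (h.trans (mul_one _).symm)
  have hBinv : ∀ a : G, B ((B a)⁻¹ * a⁻¹ * B a) = (B a)⁻¹ := by
    intro a
    have h := hRB a ((B a)⁻¹ * a⁻¹ * B a)
    have h2 : a * B a * ((B a)⁻¹ * a⁻¹ * B a) * (B a)⁻¹ = 1 := by group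
    rw [h2, hB1] at h
    exact (inv_eq_of_mul_eq_one_right h).symm
  -- SymBrace ↔ commuting of w(a,b) = B a * (B (a*b))⁻¹ * B b with everything
  have hSym : SymBrace (fun a b : G => a * B a * b * (B a)⁻¹)
        (fun a : G => (B a)⁻¹ * a⁻¹ * B a) ↔
      ∀ a b c : G, B a * (B (a * b))⁻¹ * B b * c = c * (B a * (B (a * b))⁻¹ * B b) := by
    unfold SymBrace
    constructor
    · intro hS a b c
      have e := hS a b c
      simp only at e
      rw [← hRB, hBinv] at e
      calc B a * (B (a * b))⁻¹ * B b * c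
          = B a * (B (a * b))⁻¹ * (a * b)⁻¹ * (a * (b * B b * c * (B b)⁻¹)) * B b := by group
        _ = B a * (B (a * b))⁻¹ * (a * b)⁻¹ *
              (a * b * B (a * b) * ((B a)⁻¹ * a⁻¹ * B a) * (B (a * b))⁻¹ * (B (a * b) * (B a)⁻¹) *
                (a * c) * (B (a * b) * (B a)⁻¹)⁻¹) * B b := by rw [e]
        _ = c * (B a * (B (a * b))⁻¹ * B b) := by group
    · intro hk a b c
      simp only
      rw [← hRB, hBinv]
      calc a * (b * B b * c * (B b)⁻¹)
          = a * b * B (a * b) * (B a)⁻¹ * (B a * (B (a * b))⁻¹ * B b * c) * (B b)⁻¹ := by group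
        _ = a * b * B (a * b) * (B a)⁻¹ * (c * (B a * (B (a * b))⁻¹ * B b)) * (B b)⁻¹ := by
            rw [hk]
        _ = a * b * B (a * b) * ((B a)⁻¹ * a⁻¹ * B a) * (B (a * b))⁻¹ * (B (a * b) * (B a)⁻¹) *
              (a * c) * (B (a * b) * (B a)⁻¹)⁻¹ := by group
  refine ⟨⟨fun a b c => ?_, fun a => ?_, fun a => ?_, fun a => ?_, fun a => ?_⟩,
    fun a b c => ?_, hSym.trans ⟨fun hk a c => ?_, fun hZ a b c => ?_⟩, fun hA => ?_⟩
  · simp only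
    rw [← hRB]
    group
  · simp only
    rw [hB1]
    group
  · simp only
    group
  · simp only
    rw [hBinv]
    group
  · simp only
    group
  · simp only
    group
  · -- hk → center condition
    have hw : B c * (B (c * a))⁻¹ * B a ∈ Subgroup.center G :=
      Subgroup.mem_center_iff.mpr fun g => (hk c a g).symm
    have hcomm := Subgroup.mem_center_iff.mp (inv_mem hw)
    have hzw : (B c)⁻¹ * (B a)⁻¹ * B (c * a) = (B c * (B (c * a))⁻¹ * B a)⁻¹ := by
      calc (B c)⁻¹ * (B a)⁻¹ * B (c * a)
          = (B c)⁻¹ * ((B c * (B (c * a))⁻¹ * B a)⁻¹ * B c) := by group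
        _ = (B c)⁻¹ * (B c * (B c * (B (c * a))⁻¹ * B a)⁻¹) := by rw [← hcomm (B c)]
        _ = (B c * (B (c * a))⁻¹ * B a)⁻¹ := by group
    rw [hzw]
    exact inv_mem hw
  · -- center condition → hk
    have hcomm := Subgroup.mem_center_iff.mp (inv_mem (hZ b a))
    have hwz : B a * (B (a * b))⁻¹ * B b = ((B a)⁻¹ * (B b)⁻¹ * B (a * b))⁻¹ := by
      calc B a * (B (a * b))⁻¹ * B b
          = B a * (((B a)⁻¹ * (B b)⁻¹ * B (a * b))⁻¹ * (B a)⁻¹) := by group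
        _ = B a * ((B a)⁻¹ * ((B a)⁻¹ * (B b)⁻¹ * B (a * b))⁻¹) := by rw [← hcomm ((B a)⁻¹)]
        _ = ((B a)⁻¹ * (B b)⁻¹ * B (a * b))⁻¹ := by group
    rw [hwz]
    exact (hcomm c).symm
  · -- anti-homomorphism case
    refine hSym.mpr fun a b c => ?_
    rw [hA a b]
    group
end
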